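/- arXiv:1803.08752 — 8 statements merged into one kernel-verified Lean document; each statement's English description precedes it below -/
import Mathlib

section
/- For integers m ≥ 2 and tuples β¹,…,βᵐ ∈ ℤᵐ, the intersection ⋂_{i=1}^m ∇̄_i(βⁱ) is nonempty if and only if for every i ∈ {1,…,m} and every j ≠ i one has βⁱᵢ < βʲᵢ. -/
/-- ∇̄ᵢ(β) = {x ∈ ℤᵐ : xᵢ = βᵢ and xⱼ < βⱼ for j ≠ i}. -/
def nab (m : ℕ) (i : Fin m) (β : Fin m → ℤ) : Set (Fin m → ℤ) :=
  {x | x i = β i ∧ ∀ j, j ≠ i → x j < β j}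

theorem stmt1 (m : ℕ) (hm : 2 ≤ m) (β : Fin m → (Fin m → ℤ)) :
    (⋂ i : Fin m, nab m i (β i)).Nonempty ↔
      ∀ i j : Fin m, j ≠ i → β i i < β j i := by
  constructor
  · rintro ⟨x, hx⟩ i j hji
    simp only [Set.mem_iInter] at hx
    have hi := (hx i).1
    have hj := (hx j).2 i (Ne.symm hji)
    rw [hi] at hj
    exact hj
  · intro h
    refine ⟨fun i => β i i, ?_⟩
    simp only [Set.mem_iInter]
    intro i
    exact ⟨rfl, fun j hj => h j i hj.symm⟩
end

section
/- Let S ⊆ ℤᵐ satisfy the Delgado collision property: whenever β, β' ∈ S with β ≠ β' and β_i = β'_i for some index i, there exists γ ∈ S with γ_i < β_i and, for every k ≠ i, γ_k ≤ max{β_k, β'_k}, with equality γ_k = max{β_k, β'_k} whenever β_k ≠ β'_k. Let α ∈ ℤᵐ and let i, k, l be pairwise distinct indices. If S ∩ ∇̄_{{i,k}}(α) ≠ ∅ and S ∩ ∇̄_{{i,l}}(α) ≠ ∅, then S ∩ ∇̄_{{k,l}}(α) ≠ ∅. -/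
/-- ∇̄_J(α) for J ⊆ {1,…,m}: agree with α on J, strictly smaller off J. -/
def nabJ (m : ℕ) (J : Finset (Fin m)) (α : Fin m → ℤ) : Set (Fin m → ℤ) :=
  {x | (∀ j ∈ J, x j = α j) ∧ ∀ k ∉ J, x k < α k}

/-- The Delgado collision property. -/
def Delgado (m : ℕ) (S : Set (Fin m → ℤ)) : Prop :=
  ∀ β ∈ S, ∀ β' ∈ S, β ≠ β' → ∀ i : Fin m, β i = β' i →
    ∃ γ ∈ S, γ i < β i ∧ ∀ k, k ≠ i →
      (γ k ≤ max (β k) (β' k) ∧ (β k ≠ β' k → γ k = max (β k) (β' k)))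

theorem stmt4 (m : ℕ) (S : Set (Fin m → ℤ)) (hS : Delgado m S)
    (α : Fin m → ℤ) (i k l : Fin m)
    (hik : i ≠ k) (hil : i ≠ l) (hkl : k ≠ l)
    (h1 : (S ∩ nabJ m {i, k} α).Nonempty)
    (h2 : (S ∩ nabJ m {i, l} α).Nonempty) :
    (S ∩ nabJ m {k, l} α).Nonempty := by
  obtain ⟨β, hβS, hβJ, hβlt⟩ := h1
  obtain ⟨β', hβ'S, hβ'J, hβ'lt⟩ := h2
  have hβi : β i = α i := hβJ i (by simp)
  have hβk : β k = α k := hβJ k (by simp)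
  have hβ'i : β' i = α i := hβ'J i (by simp)
  have hβ'l : β' l = α l := hβ'J l (by simp)
  have hβl : β l < α l := hβlt l (by simp [Ne.symm hil, Ne.symm hkl])
  have hβ'k : β' k < α k := hβ'lt k (by simp [Ne.symm hik, hkl])
  have hne : β ≠ β' := fun h => by rw [h] at hβk; omega
  obtain ⟨γ, hγS, hγi, hγ⟩ := hS β hβS β' hβ'S hne i (by omega)
  refine ⟨γ, hγS, ?_, ?_⟩
  · intro j hj
    rcases Finset.mem_insert.1 hj with rfl | hj
    · have := (hγ j (Ne.symm hik)).2 (by omega)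
      omega
    · rw [Finset.mem_singleton.1 hj]
      have := (hγ l (Ne.symm hil)).2 (by omega)
      omega
  · intro j hj
    simp only [Finset.mem_insert, Finset.mem_singleton, not_or] at hj
    by_cases hji : j = i
    · subst hji; omega
    · have h1 := (hγ j hji).1
      have h2 : β j < α j := hβlt j (by simp [hji, hj.1])
      have h3 : β' j < α j := hβ'lt j (by simp [hji, hj.2])
      omega
end

section
/- Let m ≥ 2 and let S ⊆ ℤᵐ be closed under componentwise maximum and satisfy the Delgado collision property: whenever β, β' ∈ S with β ≠ β' and β_i = β'_i for some index i, there exists γ ∈ S with γ_i < β_i and γ_k ≤ max{β_k, β'_k} for all k ≠ i, with equality whenever β_k ≠ β'_k. Suppose α ∈ ℤᵐ and there is an index i such that S ∩ ∇̄_{{i}}(α) = ∅ and S ∩ ∇̄_{{i,j}}(α) ≠ ∅ for every j ≠ i. Then: (a) α ∈ S; (b) S ∩ ∇̄_{{k}}(α) = ∅ for every index k; and (c) S ∩ ∇̄_J(α) ≠ ∅ for every subset J ⊊ {1,…,m} with #J ≥ 2. (That is, α is a relative maximal element of S.) -/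
theorem Finset.biUnion_erase_pair {β : Type*} [DecidableEq β] {J : Finset β} {a : β}
    (ha : a ∈ J) (hJ : (J.erase a).Nonempty) : (J.erase a).biUnion (fun j => {a, j}) = J := by
  ext k
  constructor
  · simp only [Finset.mem_biUnion, Finset.mem_erase, Finset.mem_insert, Finset.mem_singleton]
    rintro ⟨j, ⟨-, hj⟩, rfl | rfl⟩ <;> assumption
  · intro hk
    obtain ⟨j, hj⟩ := hJ
    by_cases hka : k = a
    · exact Finset.mem_biUnion.mpr ⟨j, hj, by simp [hka]⟩
    · exact Finset.mem_biUnion.mpr ⟨k, Finset.mem_erase.mpr ⟨hka, hk⟩, by simp⟩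

namespace nabJ

variable {m : ℕ} {α x y : Fin m → ℤ} {J K L : Finset (Fin m)}

theorem eq_iff_mem (hx : x ∈ nabJ m J α) (k : Fin m) : x k = α k ↔ k ∈ J :=
  ⟨fun h => by_contra fun hk => (hx.2 k hk).ne h, hx.1 k⟩

theorem eq_of_mem_of_mem (hK : x ∈ nabJ m K α) (hL : x ∈ nabJ m L α) : K = L := by
  ext k
  rw [← eq_iff_mem hK, eq_iff_mem hL]

theorem univ_eq : nabJ m Finset.univ α = {α} := by
  ext x
  simp [nabJ, funext_iff]

theorem sup_mem_union (hx : x ∈ nabJ m K α) (hy : y ∈ nabJ m L α) :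
    x ⊔ y ∈ nabJ m (K ∪ L) α := by
  have hxα : ∀ k, x k ≤ α k := fun k => by
    by_cases hk : k ∈ K
    · exact (hx.1 k hk).le
    · exact (hx.2 k hk).le
  have hyα : ∀ k, y k ≤ α k := fun k => by
    by_cases hk : k ∈ L
    · exact (hy.1 k hk).le
    · exact (hy.2 k hk).le
  refine ⟨fun k hk => ?_, fun k hk => ?_⟩
  · rcases Finset.mem_union.mp hk with hk | hk
    · exact le_antisymm (sup_le (hxα k) (hyα k)) ((hx.1 k hk).symm.le.trans le_sup_left)
    · exact le_antisymm (sup_le (hxα k) (hyα k)) ((hy.1 k hk).symm.le.trans le_sup_right)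
  · rw [Finset.mem_union, not_or] at hk
    exact sup_lt_iff.mpr ⟨hx.2 k hk.1, hy.2 k hk.2⟩

end nabJ

section

variable {m : ℕ} {S : Set (Fin m → ℤ)} {α : Fin m → ℤ} {i : Fin m}

theorem SupClosed.inter_nabJ_biUnion_nonempty {ι : Type*} [DecidableEq ι] (hS : SupClosed S)
    {T : Finset ι} (hT : T.Nonempty) {K : ι → Finset (Fin m)}
    (hK : ∀ t ∈ T, (S ∩ nabJ m (K t) α).Nonempty) :
    (S ∩ nabJ m (T.biUnion K) α).Nonempty := by
  induction hT using Finset.Nonempty.cons_induction with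
  | singleton t => simpa using hK t (Finset.mem_singleton_self t)
  | cons t T _ _ ih =>
    obtain ⟨x, hxS, hx⟩ := hK t (Finset.mem_cons_self t T)
    obtain ⟨y, hyS, hy⟩ := ih fun s hs => hK s (Finset.mem_cons_of_mem hs)
    rw [Finset.cons_eq_insert, Finset.biUnion_insert]
    exact ⟨x ⊔ y, hS hxS hyS, nabJ.sup_mem_union hx hy⟩

theorem SupClosed.inter_nabJ_nonempty_of_pairs (hS : SupClosed S)
    (hpair : ∀ a b : Fin m, a ≠ b → (S ∩ nabJ m {a, b} α).Nonempty) {J : Finset (Fin m)}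
    (hJ : 2 ≤ J.card) : (S ∩ nabJ m J α).Nonempty := by
  obtain ⟨a, ha⟩ := Finset.card_pos.mp (by omega : 0 < J.card)
  have hJa : (J.erase a).Nonempty := by
    rw [← Finset.card_pos, Finset.card_erase_of_mem ha]; omega
  rw [← Finset.biUnion_erase_pair ha hJa]
  exact hS.inter_nabJ_biUnion_nonempty hJa fun j hj => hpair a j (Finset.ne_of_mem_erase hj).symm

theorem Delgado.inter_nabJ_erase_nonempty (hS : Delgado m S) {K L : Finset (Fin m)}
    (hKL : K ∩ L = {i}) (hne : K ≠ L) {β β' : Fin m → ℤ}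
    (hβ : β ∈ S ∩ nabJ m K α) (hβ' : β' ∈ S ∩ nabJ m L α) :
    (S ∩ nabJ m ((K ∪ L).erase i) α).Nonempty := by
  obtain ⟨hβS, hβ⟩ := hβ
  obtain ⟨hβ'S, hβ'⟩ := hβ'
  have hi : i ∈ K ∧ i ∈ L := Finset.mem_inter.mp (hKL ▸ Finset.mem_singleton_self i)
  obtain ⟨γ, hγS, hγi, hγ⟩ := hS β hβS β' hβ'S (fun h => hne (nabJ.eq_of_mem_of_mem hβ (h ▸ hβ')))
    i (by rw [hβ.1 i hi.1, hβ'.1 i hi.2])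
  refine ⟨γ, hγS, fun k hk => ?_, fun k hk => ?_⟩
  · obtain ⟨hki, hk⟩ := Finset.mem_erase.mp hk
    have hkKL : k ∉ K ∨ k ∉ L := by
      by_contra! h
      exact hki (Finset.mem_singleton.mp (hKL ▸ Finset.mem_inter.mpr h))
    rcases Finset.mem_union.mp hk with hkK | hkL
    · have hlt := hβ'.2 k (hkKL.resolve_left (not_not.mpr hkK))
      rw [(hγ k hki).2 (by rw [hβ.1 k hkK]; exact hlt.ne'), hβ.1 k hkK, max_eq_left hlt.le]
    · have hlt := hβ.2 k (hkKL.resolve_right (not_not.mpr hkL))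
      rw [(hγ k hki).2 (by rw [hβ'.1 k hkL]; exact hlt.ne), hβ'.1 k hkL, max_eq_right hlt.le]
  · by_cases hki : k = i
    · rw [hki, ← hβ.1 i hi.1]
      exact hγi
    · have hk : k ∉ K ∧ k ∉ L := by simpa [hki, not_or] using hk
      exact (hγ k hki).1.trans_lt (max_lt (hβ.2 k hk.1) (hβ'.2 k hk.2))


theorem Delgado.inter_nabJ_pair_nonempty (hS : Delgado m S)
    (hij : ∀ j, j ≠ i → (S ∩ nabJ m {i, j} α).Nonempty) {a b : Fin m} (hab : a ≠ b) :
    (S ∩ nabJ m {a, b} α).Nonempty := by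
  by_cases ha : a = i
  · exact ha ▸ hij b (ha ▸ hab.symm)
  by_cases hb : b = i
  · rw [Finset.pair_comm, hb]
    exact hij a ha
  obtain ⟨β, hβ⟩ := hij a ha
  obtain ⟨β', hβ'⟩ := hij b hb
  have hKL : ({i, a} ∩ {i, b} : Finset (Fin m)) = {i} := by
    ext k; simp only [Finset.mem_inter, Finset.mem_insert, Finset.mem_singleton]; grind
  have hne : ({i, a} : Finset (Fin m)) ≠ {i, b} := by
    intro h
    have ha' : a ∈ ({i, b} : Finset (Fin m)) := h ▸ by simp
    simp [ha, hab] at ha'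
  have hunion : ({i, a} ∪ {i, b} : Finset (Fin m)).erase i = {a, b} := by
    ext k; simp only [Finset.mem_erase, Finset.mem_union, Finset.mem_insert,
      Finset.mem_singleton]; grind
  exact hunion ▸ hS.inter_nabJ_erase_nonempty hKL hne hβ hβ'

theorem Delgado.inter_nabJ_singleton_eq_empty (hS : Delgado m S) (hi : S ∩ nabJ m {i} α = ∅)
    (hij : ∀ j, j ≠ i → (S ∩ nabJ m {i, j} α).Nonempty) (k : Fin m) :
    S ∩ nabJ m {k} α = ∅ := by
  by_cases hk : k = i
  · exact hk ▸ hi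
  rw [← Set.not_nonempty_iff_eq_empty]
  rintro ⟨x, hx⟩
  obtain ⟨β, hβ⟩ := hij k hk
  have hKL : ({k} ∩ {i, k} : Finset (Fin m)) = {k} := by simp
  have hne : ({k} : Finset (Fin m)) ≠ {i, k} := fun h =>
    hk (Finset.mem_singleton.mp (h ▸ Finset.mem_insert_self i {k})).symm
  have hunion : ({k} ∪ {i, k} : Finset (Fin m)).erase k = {i} := by
    ext l; simp only [Finset.mem_erase, Finset.mem_union, Finset.mem_insert,
      Finset.mem_singleton]; grind
  exact (hunion ▸ hS.inter_nabJ_erase_nonempty hKL hne hx hβ).ne_empty hi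

end

theorem stmt6 (m : ℕ) (hm : 2 ≤ m) (S : Set (Fin m → ℤ))
    (hlub : ∀ x ∈ S, ∀ y ∈ S, (fun k => max (x k) (y k)) ∈ S)
    (hS : Delgado m S) (α : Fin m → ℤ) (i : Fin m)
    (hi : S ∩ nabJ m {i} α = ∅)
    (hij : ∀ j : Fin m, j ≠ i → (S ∩ nabJ m {i, j} α).Nonempty) :
    α ∈ S ∧ (∀ k : Fin m, S ∩ nabJ m {k} α = ∅) ∧
    (∀ J : Finset (Fin m), J ⊂ Finset.univ → 2 ≤ J.card →
      (S ∩ nabJ m J α).Nonempty) := by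
  have hsup : SupClosed S := fun x hx y hy => hlub x hx y hy
  have hJ : ∀ J : Finset (Fin m), 2 ≤ J.card → (S ∩ nabJ m J α).Nonempty := fun _ =>
    hsup.inter_nabJ_nonempty_of_pairs fun _ _ => hS.inter_nabJ_pair_nonempty hij
  refine ⟨?_, hS.inter_nabJ_singleton_eq_empty hi hij, fun J _ => hJ J⟩
  obtain ⟨x, hxS, hx⟩ := hJ Finset.univ (by simpa using hm)
  rw [nabJ.univ_eq, Set.mem_singleton_iff] at hx
  exact hx ▸ hxS
end

section
/- Let a, b ≥ 2 be coprime integers and let H = ⟨a,b⟩ = {ua + vb : u, v ∈ ℕ₀} be the numerical semigroup generated by a and b. Then for every integer n with 0 ≤ n ≤ ab − a − b, one has n ∈ H if and only if ab − a − b − n ∉ H. -/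
theorem stmt7 (a b : ℕ) (ha : 2 ≤ a) (hb : 2 ≤ b) (hab : Nat.Coprime a b)
    (n : ℕ) (hn : n ≤ a * b - a - b) :
    (∃ u v : ℕ, n = u * a + v * b) ↔ ¬ ∃ u v : ℕ, a * b - a - b - n = u * a + v * b := by
  have hF : a + b ≤ a * b := by nlinarith
  constructor
  · rintro ⟨u, v, huv⟩ ⟨u', v', huv'⟩
    have h3 : a * b = u * a + v * b + (u' * a + v' * b) + a + b := by
      obtain ⟨P, hP⟩ : ∃ P, a * b = P := ⟨_, rfl⟩
      rw [hP] at hn huv' hF ⊢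
      omega
    have key : (u + u' + 1) * a + (v + v' + 1) * b = a * b := by
      rw [h3]; ring
    have h1 : b ∣ a * b := Dvd.intro_left a rfl
    have h2 : b ∣ (v + v' + 1) * b := Dvd.intro_left _ rfl
    have hsum : b ∣ (u + u' + 1) * a + (v + v' + 1) * b := key ▸ h1
    have hbd : b ∣ (u + u' + 1) * a := (Nat.dvd_add_iff_left h2).mpr hsum
    have h1' : a ∣ a * b := Dvd.intro b rfl
    have h2' : a ∣ (u + u' + 1) * a := Dvd.intro_left _ rfl
    have had : a ∣ (v + v' + 1) * b := by
      have : a ∣ (u + u' + 1) * a + (v + v' + 1) * b := key ▸ h1'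
      exact (Nat.dvd_add_right h2').mp this
    have hbu : b ∣ u + u' + 1 := hab.symm.dvd_of_dvd_mul_right hbd
    have hav : a ∣ v + v' + 1 := hab.dvd_of_dvd_mul_right had
    have hle1 : b ≤ u + u' + 1 := Nat.le_of_dvd (by omega) hbu
    have hle2 : a ≤ v + v' + 1 := Nat.le_of_dvd (by omega) hav
    have c1 : b * a ≤ (u + u' + 1) * a := Nat.mul_le_mul_right a hle1
    have c2 : a * b ≤ (v + v' + 1) * b := Nat.mul_le_mul_right b hle2
    have c3 : b * a = a * b := mul_comm b a
    have c4 : 0 < a * b := by positivity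
    obtain ⟨P, hP⟩ : ∃ P, a * b = P := ⟨_, rfl⟩
    obtain ⟨X, hX⟩ : ∃ X, (u + u' + 1) * a = X := ⟨_, rfl⟩
    obtain ⟨Y, hY⟩ : ∃ Y, (v + v' + 1) * b = Y := ⟨_, rfl⟩
    obtain ⟨Q, hQ⟩ : ∃ Q, b * a = Q := ⟨_, rfl⟩
    rw [hP, hX, hY, hQ] at *
    omega
  · intro h
    by_contra hn'
    apply h
    haveI : NeZero b := ⟨by omega⟩
    have haU : IsUnit (a : ZMod b) := (ZMod.isUnit_iff_coprime a b).mpr hab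
    set x : ZMod b := (n : ZMod b) * (a : ZMod b)⁻¹ with hx
    set u₀ : ℕ := x.val with hu₀
    have hult : u₀ < b := ZMod.val_lt x
    have hmod : u₀ * a ≡ n [MOD b] := by
      have : ((u₀ * a : ℕ) : ZMod b) = ((n : ℕ) : ZMod b) := by
        push_cast
        rw [ZMod.natCast_val, ZMod.cast_id, hx]
        rw [mul_assoc, ZMod.inv_mul_of_unit _ haU, mul_one]
      exact (ZMod.natCast_eq_natCast_iff _ _ _).mp this
    rcases le_or_gt (u₀ * a) n with hle | hlt
    · exfalso
      apply hn'
      obtain ⟨k, hk⟩ := (Nat.modEq_iff_dvd' hle).mp hmod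
      refine ⟨u₀, k, ?_⟩
      have e4 : b * k = k * b := mul_comm b k
      obtain ⟨Q, hQ⟩ : ∃ Q, u₀ * a = Q := ⟨_, rfl⟩
      obtain ⟨T, hT⟩ : ∃ T, k * b = T := ⟨_, rfl⟩
      rw [hQ] at hk hle
      rw [hT] at e4 ⊢
      omega
    · obtain ⟨k, hk⟩ := (Nat.modEq_iff_dvd' hlt.le).mp hmod.symm
      have hk1 : 1 ≤ k := by
        rcases Nat.eq_zero_or_pos k with h0 | h0
        · subst h0; rw [mul_zero] at hk; omega
        · omega
      refine ⟨b - 1 - u₀, k - 1, ?_⟩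
      have e1 : (b - 1 - u₀) * a + u₀ * a + a = b * a := by
        have hs : (b - 1 - u₀) + u₀ + 1 = b := by omega
        calc (b - 1 - u₀) * a + u₀ * a + a = ((b - 1 - u₀) + u₀ + 1) * a := by ring
        _ = b * a := by rw [hs]
      have e2 : (k - 1) * b + b = k * b := by
        have hs : (k - 1) + 1 = k := by omega
        calc (k - 1) * b + b = ((k - 1) + 1) * b := by ring
        _ = k * b := by rw [hs]
      have e3 : b * a = a * b := mul_comm b a
      have e4 : b * k = k * b := mul_comm b k
      obtain ⟨P, hP⟩ : ∃ P, a * b = P := ⟨_, rfl⟩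
      obtain ⟨Q, hQ⟩ : ∃ Q, u₀ * a = Q := ⟨_, rfl⟩
      obtain ⟨R, hR⟩ : ∃ R, (b - 1 - u₀) * a = R := ⟨_, rfl⟩
      obtain ⟨S, hS⟩ : ∃ S, (k - 1) * b = S := ⟨_, rfl⟩
      obtain ⟨T, hT⟩ : ∃ T, k * b = T := ⟨_, rfl⟩
      obtain ⟨W, hW⟩ : ∃ W, b * a = W := ⟨_, rfl⟩
      rw [hP] at hn hF e3
      rw [hQ] at hk hlt e1
      rw [hR] at e1 ⊢
      rw [hS] at e2 ⊢
      rw [hT] at e2 e4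
      rw [hW] at e1 e3
      rw [e4] at hk
      omega
end

section
/- Let a, b ≥ 2 be coprime integers. Then the number of gaps of the numerical semigroup ⟨a,b⟩, i.e. the cardinality of ℕ₀ \ ⟨a,b⟩, equals (a−1)(b−1)/2. -/
theorem stmt8 (a b : ℕ) (ha : 2 ≤ a) (hb : 2 ≤ b) (hab : Nat.Coprime a b) :
    {n : ℕ | ¬ ∃ u v : ℕ, n = u * a + v * b}.ncard = (a - 1) * (b - 1) / 2 := by
  classical
  set P : ℕ → Prop := fun n => ∃ u v : ℕ, n = u * a + v * b with hPdef
  set M := (a - 1) * (b - 1) with hMdef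
  have hM : M + a + b = a * b + 1 := by
    have h1 : 1 ≤ a := by omega
    have h2 : 1 ≤ b := by omega
    zify [h1, h2, hMdef]
    ring
  have hMpos : 0 < M := Nat.mul_pos (by omega) (by omega)
  haveI : NeZero b := ⟨by omega⟩
  -- canonical residue
  have exu : ∀ n : ℕ, ∃ u, u < b ∧ n ≡ u * a [MOD b] := by
    intro n
    have hu : IsUnit (a : ZMod b) := (ZMod.isUnit_iff_coprime a b).mpr hab
    refine ⟨((n : ZMod b) * ↑hu.unit⁻¹).val, ZMod.val_lt _, ?_⟩
    rw [← ZMod.natCast_eq_natCast_iff]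
    push_cast
    rw [ZMod.natCast_val, ZMod.cast_id, mul_assoc, hu.val_inv_mul, mul_one]
  -- not both representable
  have notboth : ∀ n m : ℕ, n + m + 1 = M → P n → P m → False := by
    rintro n m hnm ⟨u, v, rfl⟩ ⟨u', v', rfl⟩
    have hsum : u * a + v * b + (u' * a + v' * b) + a + b = a * b := by linarith
    have key : (u + u' + 1) * a + (v + v' + 1) * b = a * b := by
      zify at hsum ⊢
      linear_combination hsum
    have hdvd : b ∣ (u + u' + 1) * a := by
      have h1 : b ∣ (v + v' + 1) * b := dvd_mul_left b _
      have h2 : b ∣ (v + v' + 1) * b + (u + u' + 1) * a := by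
        rw [add_comm, key]; exact dvd_mul_left b a
      exact (Nat.dvd_add_right h1).mp h2
    have hbs : b ∣ u + u' + 1 := hab.symm.dvd_of_dvd_mul_right hdvd
    have hble : b ≤ u + u' + 1 := Nat.le_of_dvd (by omega) hbs
    have h3 : b * a ≤ (u + u' + 1) * a := Nat.mul_le_mul_right a hble
    have h4 : b ≤ (v + v' + 1) * b := Nat.le_mul_of_pos_left b (by omega)
    have h5 : a * b = b * a := mul_comm a b
    linarith
  -- complement representable
  have two : ∀ n m : ℕ, n + m + 1 = M → ¬ P n → P m := by
    intro n m hnm hn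
    obtain ⟨u, hu, hcong⟩ := exu n
    by_cases hle : u * a ≤ n
    · exfalso
      obtain ⟨k, hk⟩ := (Nat.modEq_iff_dvd' hle).mp hcong.symm
      exact hn ⟨u, k, by rw [mul_comm k b, ← hk, Nat.add_sub_cancel' hle]⟩
    · push_neg at hle
      obtain ⟨k, hk⟩ := (Nat.modEq_iff_dvd' hle.le).mp hcong
      have hk1 : 1 ≤ k := by
        rcases Nat.eq_zero_or_pos k with h | h
        · subst h; simp at hk; omega
        · exact h
      refine ⟨b - 1 - u, k - 1, ?_⟩
      have hXn : u * a = n + b * k := by omega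
      have hsum : n + m + a + b = a * b := by linarith
      zify [show u ≤ b - 1 by omega, show 1 ≤ k by omega, show 1 ≤ b by omega] at hXn hsum ⊢
      linear_combination hsum + hXn
  -- all n ≥ M are representable
  have big : ∀ n : ℕ, M ≤ n → P n := by
    intro n hn
    obtain ⟨u, hu, hcong⟩ := exu n
    by_cases hle : u * a ≤ n
    · obtain ⟨k, hk⟩ := (Nat.modEq_iff_dvd' hle).mp hcong.symm
      exact ⟨u, k, by rw [mul_comm k b, ← hk, Nat.add_sub_cancel' hle]⟩
    · exfalso
      push_neg at hle
      have hdvd := (Nat.modEq_iff_dvd' hle.le).mp hcong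
      have hble : b ≤ u * a - n := Nat.le_of_dvd (by omega) hdvd
      have h1 : n + b ≤ u * a := by omega
      have h2 : u * a ≤ (b - 1) * a := Nat.mul_le_mul_right a (by omega)
      have h3 : (b - 1) * a + a = a * b := by
        zify [show 1 ≤ b by omega]; ring
      linarith
  -- the gap set as a finset
  have hset : {n : ℕ | ¬ P n} = ↑((Finset.range M).filter fun n => ¬ P n) := by
    ext n
    simp only [Set.mem_setOf_eq, Finset.coe_filter, Finset.mem_range]
    exact ⟨fun hn => ⟨lt_of_not_ge fun h => hn (big n h), hn⟩, fun h => h.2⟩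
  rw [hset, Set.ncard_coe_finset]
  have hcards : ((Finset.range M).filter fun n => ¬ P n).card
      = ((Finset.range M).filter fun n => P n).card := by
    apply Finset.card_bij (fun n _ => M - 1 - n)
    · intro n hn
      simp only [Finset.mem_filter, Finset.mem_range] at hn ⊢
      exact ⟨by omega, two n (M - 1 - n) (by omega) hn.2⟩
    · intro n hn n' hn' h
      simp only [Finset.mem_filter, Finset.mem_range] at hn hn'
      omega
    · intro m hm
      simp only [Finset.mem_filter, Finset.mem_range] at hm
      refine ⟨M - 1 - m, ?_, by omega⟩
      simp only [Finset.mem_filter, Finset.mem_range]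
      exact ⟨by omega, fun hP' => notboth (M - 1 - m) m (by omega) hP' hm.2⟩
  have htot : ((Finset.range M).filter fun n => P n).card
      + ((Finset.range M).filter fun n => ¬ P n).card = M := by
    rw [Finset.card_filter_add_card_filter_not, Finset.card_range]
  omega
end

section
/- Let a, b ≥ 2 be coprime integers. Then the set of gaps of the numerical semigroup ⟨a,b⟩ equals A* := {a(b−i) − b(1+j) : 1 ≤ i ≤ b−1, j ≥ 0, and a(b−i) − b(1+j) ≥ 0}. -/
/-- The gap set of ⟨a,b⟩ equals
A* = {a(b−i) − b(1+j) : 1 ≤ i ≤ b−1, j ≥ 0, a(b−i) − b(1+j) ≥ 0}.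
The condition `a*(b-i) = n + b*(1+j)` encodes `n = a(b−i) − b(1+j) ≥ 0` in ℕ. -/
theorem stmt10 (a b : ℕ) (ha : 2 ≤ a) (hb : 2 ≤ b) (hab : Nat.Coprime a b) :
    {n : ℕ | ¬ ∃ u v : ℕ, n = u * a + v * b} =
      {n : ℕ | ∃ i j : ℕ, 1 ≤ i ∧ i ≤ b - 1 ∧ a * (b - i) = n + b * (1 + j)} := by
  haveI : NeZero b := ⟨by omega⟩
  ext n
  simp only [Set.mem_setOf_eq]
  constructor
  · intro hn
    have hu : IsUnit (a : ZMod b) := (ZMod.isUnit_iff_coprime a b).mpr hab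
    set c : ℕ := (((hu.unit⁻¹ : (ZMod b)ˣ) : ZMod b) * (n : ZMod b)).val with hc
    have hcb : c < b := ZMod.val_lt _
    have hac : ((a * c : ℕ) : ZMod b) = (n : ZMod b) := by
      push_cast
      rw [hc, ZMod.natCast_val, ZMod.cast_id, ← mul_assoc]
      have h1 : (a : ZMod b) * ((hu.unit⁻¹ : (ZMod b)ˣ) : ZMod b) = 1 :=
        hu.mul_val_inv
      rw [h1, one_mul]
    have hmod : a * c ≡ n [MOD b] := (ZMod.natCast_eq_natCast_iff _ _ _).mp hac
    have hc0 : c ≠ 0 := by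
      intro h
      apply hn
      have hzero : n ≡ 0 [MOD b] := by simpa [h] using hmod.symm
      obtain ⟨k, hk⟩ := (Nat.modEq_zero_iff_dvd).mp hzero
      exact ⟨0, k, by rw [hk]; ring⟩
    have hgt : n < a * c := by
      by_contra h
      push_neg at h
      apply hn
      obtain ⟨k, hk⟩ := (Nat.modEq_iff_dvd' h).mp hmod
      have h2 : n = a * c + b * k := by omega
      exact ⟨c, k, by rw [h2]; ring⟩
    obtain ⟨m, hm⟩ := (Nat.modEq_iff_dvd' hgt.le).mp hmod.symm
    have hm1 : 1 ≤ m := by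
      rcases Nat.eq_zero_or_pos m with h | h
      · subst h; simp at hm; omega
      · exact h
    refine ⟨b - c, m - 1, by omega, by omega, ?_⟩
    have hbc : b - (b - c) = c := by omega
    rw [hbc]
    have hm' : 1 + (m - 1) = m := by omega
    rw [hm']
    omega
  · rintro ⟨i, j, hi1, hib, heq⟩
    rintro ⟨u, v, rfl⟩
    set c := b - i with hcdef
    have hc1 : 1 ≤ c := by omega
    have hcb : c < b := by omega
    have hpos : 0 < b * (1 + j) := by positivity
    have huc : u < c := by
      have h1 : u * a < a * c := by omega
      have h2 : u * a < c * a := by rw [mul_comm c a]; omega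
      exact Nat.lt_of_mul_lt_mul_right h2
    have hexp : a * c = a * u + a * (c - u) := by
      rw [← Nat.mul_add]
      congr 1
      omega
    have hua : u * a = a * u := Nat.mul_comm u a
    have key : a * (c - u) = v * b + b * (1 + j) := by omega
    have hdvd : b ∣ a * (c - u) := by
      rw [key]
      exact ⟨v + (1 + j), by ring⟩
    have hbcu : b ∣ (c - u) := Nat.Coprime.dvd_of_dvd_mul_left hab.symm hdvd
    have := Nat.le_of_dvd (by omega) hbcu
    omega
end

section
/- Let S ⊆ ℤᵐ be closed under componentwise maximum and satisfy the Delgado collision property (as below). Let α ∈ ℤᵐ and suppose there exists an index i with S ∩ ∇̄_{{i}}(α) = ∅ and S ∩ ∇̄_{{i,j}}(α) ≠ ∅ for all j ≠ i. Then for every index k, S ∩ ∇̄_{{k}}(α) = ∅. -/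
theorem stmt16 (m : ℕ) (S : Set (Fin m → ℤ))
    (hlub : ∀ x ∈ S, ∀ y ∈ S, (fun k => max (x k) (y k)) ∈ S)
    (hS : Delgado m S) (α : Fin m → ℤ) (i : Fin m)
    (hi : S ∩ nabJ m {i} α = ∅)
    (hij : ∀ j : Fin m, j ≠ i → (S ∩ nabJ m {i, j} α).Nonempty) :
    ∀ k : Fin m, S ∩ nabJ m {k} α = ∅ := by
  intro k
  by_cases hk : k = i
  · subst hk; exact hi
  · rw [Set.eq_empty_iff_forall_notMem]
    rintro x ⟨hxS, hx1, hx2⟩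
    obtain ⟨β, hβS, hβ1, hβ2⟩ := hij k hk
    have hxi : x i < α i := hx2 i (by simp [Ne.symm hk])
    have hβi : β i = α i := hβ1 i (by simp)
    have hβk : β k = α k := hβ1 k (by simp)
    have hxk : x k = α k := hx1 k (by simp)
    have hne : x ≠ β := fun h => by rw [h, hβi] at hxi; exact lt_irrefl _ hxi
    obtain ⟨γ, hγS, hγk, hγ⟩ := hS x hxS β hβS hne k (by rw [hxk, hβk])
    have hγi : γ i = α i := by
      have h := (hγ i (Ne.symm hk)).2 (by rw [hβi]; exact ne_of_lt hxi)
      rw [h, hβi, max_eq_right (le_of_lt hxi)]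
    have hmem : γ ∈ S ∩ nabJ m {i} α := by
      refine ⟨hγS, fun j hj => ?_, fun l hl => ?_⟩
      · simp only [Finset.mem_singleton] at hj; rw [hj, hγi]
      · simp only [Finset.mem_singleton] at hl
        by_cases hlk : l = k
        · subst hlk; rw [hxk] at hγk; exact hγk
        · have h1 := (hγ l hlk).1
          have h2 : x l < α l := hx2 l (by simp [hlk])
          have h3 : β l < α l := hβ2 l (by simp [hl, hlk])
          exact lt_of_le_of_lt h1 (max_lt h2 h3)
    rw [hi] at hmem; exact hmem
end

section
/- Let a, b ≥ 2 be coprime integers. For each i with 1 ≤ i ≤ b−1, the number of integers j ≥ 0 with a(b−i) − b(1+j) ≥ 0 equals ⌊(a(b−i) − b)/b⌋ + 1, and summing over i: Σ_{i=1}^{b−1} (⌊(a(b−i)−b)/b⌋ + 1) = (a−1)(b−1)/2. -/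
lemma aux_ediv_neg {b x : ℤ} (hb : 0 < b) (h : ¬ b ∣ x) :
    (-x) / b + x / b = -1 := by
  have h1 := Int.emod_add_mul_ediv x b
  have h2 := Int.emod_add_mul_ediv (-x) b
  have h3 : 0 ≤ x % b := Int.emod_nonneg x hb.ne'
  have h4 : x % b < b := Int.emod_lt_of_pos x hb
  have h5 : 0 ≤ (-x) % b := Int.emod_nonneg (-x) hb.ne'
  have h6 : (-x) % b < b := Int.emod_lt_of_pos (-x) hb
  have h7 : x % b ≠ 0 := fun hc => h (Int.dvd_of_emod_eq_zero hc)
  -- x % b + (-x) % b = b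
  have hsum : x % b + (-x) % b + b * (x / b + (-x) / b) = 0 := by ring_nf; linarith [h1, h2]
  have : b * (x / b + (-x) / b) = -(x % b + (-x) % b) := by linarith
  -- so b divides x%b + (-x)%b, with 0 < sum < 2b
  have hpos : 0 < x % b + (-x) % b := by
    rcases lt_or_eq_of_le h5 with h' | h'
    · linarith
    · exfalso
      have : b ∣ -x := Int.dvd_of_emod_eq_zero h'.symm
      exact h ((dvd_neg).mp this)
  have hlt : x % b + (-x) % b < 2 * b := by linarith
  -- b * k = -(s) with 0 < s < 2b means k = -1
  set k := x / b + (-x) / b with hk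
  have hbk : b * k = -(x % b + (-x) % b) := this
  have : k = -1 := by
    by_contra hne
    rcases lt_or_gt_of_ne hne with h' | h'
    · have : k ≤ -2 := by omega
      nlinarith
    · have : -1 < k := h'
      have : 0 ≤ k ∨ k = 0 := by omega
      nlinarith
  linarith [this]

theorem stmt17 (a b : ℤ) (ha : 2 ≤ a) (hb : 2 ≤ b) (hab : IsCoprime a b) :
    (∀ i : ℤ, 1 ≤ i → i ≤ b - 1 →
      ({j : ℕ | 0 ≤ a * (b - i) - b * (1 + (j : ℤ))}.ncard : ℤ) =
        (a * (b - i) - b).fdiv b + 1) ∧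
    ∑ i ∈ Finset.Icc (1 : ℤ) (b - 1), ((a * (b - i) - b).fdiv b + 1) =
      (a - 1) * (b - 1) / 2 := by
  have hb0 : 0 < b := by linarith
  have hfd : ∀ x : ℤ, x.fdiv b = x / b := fun x => Int.fdiv_eq_ediv_of_nonneg x hb0.le
  constructor
  · intro i hi1 hi2
    rw [hfd]
    set m : ℤ := (a * (b - i) - b) / b with hm
    have hmge : -1 ≤ m := by
      have h1 : -b ≤ a * (b - i) - b := by nlinarith
      have := Int.ediv_le_ediv hb0 h1
      rwa [Int.neg_ediv_of_dvd dvd_rfl, Int.ediv_self hb0.ne'] at this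
    have hset : ∀ j : ℕ, (0 ≤ a * (b - i) - b * (1 + (j : ℤ))) ↔ (j : ℤ) ≤ m := by
      intro j
      rw [hm]
      have : a * (b - i) - b = a * (b - i) + (-1) * b := by ring
      rw [this, Int.add_mul_ediv_right _ _ hb0.ne']
      constructor
      · intro h
        have : (j : ℤ) + 1 ≤ a * (b - i) / b := by
          rw [Int.le_ediv_iff_mul_le hb0]; nlinarith
        linarith
      · intro h
        have : ((j : ℤ) + 1) * b ≤ a * (b - i) := by
          rw [← Int.le_ediv_iff_mul_le hb0]; linarith
        nlinarith
    rcases le_or_gt 0 m with hm0 | hm0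
    · have : {j : ℕ | 0 ≤ a * (b - i) - b * (1 + (j : ℤ))} = ↑(Finset.Iic m.toNat) := by
        ext j
        simp only [Set.mem_setOf_eq, Finset.coe_Iic, Set.mem_Iic, hset j]
        omega
      rw [this, Set.ncard_coe_finset, Nat.card_Iic]
      push_cast
      omega
    · have hm1 : m = -1 := by omega
      have : {j : ℕ | 0 ≤ a * (b - i) - b * (1 + (j : ℤ))} = ∅ := by
        ext j
        simp only [Set.mem_setOf_eq, Set.mem_empty_iff_false, iff_false, hset j, hm1]
        omega
      rw [this, Set.ncard_empty]
      omega
  · set f : ℤ → ℤ := fun i => (a * (b - i) - b).fdiv b + 1 with hf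
    have hfval : ∀ i : ℤ, f i = a * (b - i) / b := by
      intro i
      simp only [hf, hfd]
      have : a * (b - i) - b = a * (b - i) + (-1) * b := by ring
      rw [this, Int.add_mul_ediv_right _ _ hb0.ne']
      ring
    have hpair : ∀ i ∈ Finset.Icc (1 : ℤ) (b - 1), f i + f (b - i) = a - 1 := by
      intro i hi
      rw [Finset.mem_Icc] at hi
      have hnd : ¬ b ∣ a * i := by
        intro hd
        have : b ∣ i := by
          have := (IsCoprime.dvd_of_dvd_mul_left (hab.symm) hd)
          exact this
        have := Int.le_of_dvd (by omega) this
        omega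
      rw [hfval, hfval]
      have h1 : a * (b - i) = -(a * i) + a * b := by ring
      have h2 : b - (b - i) = i := by ring
      rw [h1, h2, Int.add_mul_ediv_right _ _ hb0.ne']
      have := aux_ediv_neg hb0 hnd
      linarith
    have hrefl : ∑ i ∈ Finset.Icc (1 : ℤ) (b - 1), f (b - i)
        = ∑ i ∈ Finset.Icc (1 : ℤ) (b - 1), f i := by
      apply Finset.sum_nbij' (fun i => b - i) (fun i => b - i)
      · intro x hx; rw [Finset.mem_Icc] at *; omega
      · intro x hx; rw [Finset.mem_Icc] at *; omega
      · intro x _; ring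
      · intro x _; ring
      · intro x _; rfl
    have hcard : (Finset.Icc (1 : ℤ) (b - 1)).card = (b - 1).toNat := by
      rw [Int.card_Icc]; omega
    have h2S : 2 * ∑ i ∈ Finset.Icc (1 : ℤ) (b - 1), f i = (a - 1) * (b - 1) := by
      have : 2 * ∑ i ∈ Finset.Icc (1 : ℤ) (b - 1), f i
          = ∑ i ∈ Finset.Icc (1 : ℤ) (b - 1), (f i + f (b - i)) := by
        rw [two_mul]
        nth_rewrite 2 [← hrefl]
        exact (Finset.sum_add_distrib).symm
      rw [this, Finset.sum_congr rfl hpair, Finset.sum_const, hcard]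
      have : ((b - 1).toNat : ℤ) = b - 1 := by omega
      rw [nsmul_eq_mul, this]; ring
    set t := (a - 1) * (b - 1)
    show ∑ i ∈ Finset.Icc (1 : ℤ) (b - 1), f i = t / 2
    omega
end
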